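/- arXiv:1410.4770 — 7 statements merged into one kernel-verified Lean document; each statement's English description precedes it below -/
import Mathlib

section
/- For R ≥ 100 and β = 0.01, for every t ∈ ℝ and every w ∈ ℂ with Re[w] = −(11/10)β and |Im[w]| ≤ 2β², the real part of the vector field u(t,w) = 2R w̄ + R e^{−it/2} w̄² − (i/2)w satisfies Re[u(t,w)] < 0. -/
/-!
On the left side `Re w = -(11/10)β` the term `2R w̄` has real part `-2.2βR`. Since
`|e^{-it/2}| = 1`, the quadratic term has real part at most `R|w|² ≈ 1.21β²R`, and the rotation
term `-(i/2)w` contributes `Im w / 2 ≤ β²`; so the first term wins.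
-/

open Complex

noncomputable def vectorField (R t : ℝ) (w : ℂ) : ℂ :=
  2 * (R : ℂ) * (starRingEnd ℂ) w
    + (R : ℂ) * Complex.exp (-Complex.I * t / 2) * (starRingEnd ℂ) w ^ 2
    - Complex.I / 2 * w

lemma norm_exp_neg_I_mul_div_two (t : ℝ) : ‖Complex.exp (-Complex.I * t / 2)‖ = 1 := by
  rw [show -Complex.I * t / 2 = ((-t / 2 : ℝ) : ℂ) * Complex.I by push_cast; ring]
  exact norm_exp_ofReal_mul_I _

lemma re_vectorField_le (R t : ℝ) (hR : 0 ≤ R) (w : ℂ) :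
    (vectorField R t w).re ≤ R * (2 * w.re + ‖w‖ ^ 2) + w.im / 2 := by
  have hquad : (Complex.exp (-Complex.I * t / 2) * (starRingEnd ℂ) w ^ 2).re ≤ ‖w‖ ^ 2 := by
    calc _ ≤ ‖Complex.exp (-Complex.I * t / 2) * (starRingEnd ℂ) w ^ 2‖ := re_le_norm _
      _ = ‖w‖ ^ 2 := by rw [norm_mul, norm_pow, norm_exp_neg_I_mul_div_two, RCLike.norm_conj,
          one_mul]
  have hlin : (vectorField R t w).re = 2 * R * w.re
      + R * (Complex.exp (-Complex.I * t / 2) * (starRingEnd ℂ) w ^ 2).re + w.im / 2 := by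
    simp only [vectorField, mul_assoc, sub_re, add_re, mul_re, conj_re,
      div_re, div_im, I_re, I_im, re_ofNat, im_ofNat]
    norm_num
    ring
  rw [hlin]
  nlinarith [mul_le_mul_of_nonneg_left hquad hR]

theorem stmt_2 (R β : ℝ) (hR : R ≥ 100) (hβ : β = 0.01) (t : ℝ) (w : ℂ)
    (hre : w.re = -(11 / 10) * β) (him : |w.im| ≤ 2 * β ^ 2) :
    (2 * (R : ℂ) * (starRingEnd ℂ) w
      + (R : ℂ) * Complex.exp (-Complex.I * t / 2) * (starRingEnd ℂ) w ^ 2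
      - Complex.I / 2 * w).re < 0 := by
  subst hβ
  obtain ⟨him_lo, him_hi⟩ := abs_le.mp him
  have hnorm : ‖w‖ ^ 2 = w.re ^ 2 + w.im ^ 2 := by rw [Complex.sq_norm, normSq_apply]; ring
  have hdrift : 2 * w.re + ‖w‖ ^ 2 ≤ -1 / 50 := by
    rw [hnorm, hre]; norm_num at him_lo him_hi ⊢; nlinarith
  calc (vectorField R t w).re ≤ R * (2 * w.re + ‖w‖ ^ 2) + w.im / 2 :=
        re_vectorField_le R t (by linarith) w
    _ < 0 := by norm_num at him_hi; nlinarith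
end

section
/- Let R ≥ 100, N ≥ 0 with R ≥ 100N, and β = 0.01. For every t ∈ [−β, β] and every z ∈ ℂ with |Re z| ≤ 0.98 and |Im z| ≤ 1, and for every f with |f(t,z)| ≤ N, the vector field v(t,z) = R e^{it}(z̄² − 1) + f(t,z) satisfies Re[v(t,z)] ≤ N + R(−cos β + (Re z)²/cos β) < 0. -/
/-!
Write `e^{it} = c + i s` and `z = x + i y`. Then `Re[e^{it}(z̄² - 1)] = c (x² - y² - 1) + 2 x y s`,
and `(s x - c y)² ≥ 0` bounds this by `-c + x²/c`. That bound decreases in `c`, so for `|t| ≤ β`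
we may replace `c = cos t` by `cos β ≥ 0.9999`. With `x² ≤ 0.98²` the bracket is below `-0.039`,
which beats the perturbation since `N ≤ R / 100`.
-/

open Complex

lemma re_exp_mul_I_mul_conj_sq_sub_one (t : ℝ) (z : ℂ) :
    (exp (I * t) * ((starRingEnd ℂ) z ^ 2 - 1)).re
      = Real.cos t * (z.re ^ 2 - z.im ^ 2 - 1) + 2 * z.re * z.im * Real.sin t := by
  rw [mul_comm I, exp_mul_I, ← ofReal_cos, ← ofReal_sin]
  simp only [mul_re, mul_im, add_re, add_im, sub_re, sub_im, pow_two, conj_re, conj_im,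
    ofReal_re, ofReal_im, I_re, I_im, one_re, one_im]
  ring

lemma re_exp_mul_I_mul_conj_sq_sub_one_le {t : ℝ} (ht : 0 < Real.cos t) (z : ℂ) :
    (exp (I * t) * ((starRingEnd ℂ) z ^ 2 - 1)).re ≤ -Real.cos t + z.re ^ 2 / Real.cos t := by
  have hsq : 0 ≤ (Real.sin t * z.re - Real.cos t * z.im) ^ 2 / Real.cos t := by positivity
  have key : (Real.sin t * z.re - Real.cos t * z.im) ^ 2 / Real.cos t
      = (-Real.cos t + z.re ^ 2 / Real.cos t)
        - (Real.cos t * (z.re ^ 2 - z.im ^ 2 - 1) + 2 * z.re * z.im * Real.sin t) := by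
    field_simp
    linear_combination z.re ^ 2 * Real.sin_sq_add_cos_sq t
  rw [re_exp_mul_I_mul_conj_sq_sub_one]
  linarith

lemma neg_add_sq_div_le_of_le {a b x : ℝ} (ha : 0 < a) (hab : a ≤ b) :
    -b + x ^ 2 / b ≤ -a + x ^ 2 / a := by
  gcongr

lemma cos_le_cos_of_abs_le {t β : ℝ} (ht : |t| ≤ β) (hβ : β ≤ Real.pi) :
    Real.cos β ≤ Real.cos t :=
  Real.cos_abs t ▸ Real.cos_le_cos_of_nonneg_of_le_pi (abs_nonneg t) hβ ht

lemma cos_one_hundredth_ge : (0.9999 : ℝ) ≤ Real.cos 0.01 := by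
  nlinarith [Real.one_sub_sq_div_two_le_cos (x := 0.01)]

theorem stmt_4_general (R N β : ℝ) (hR : R ≥ 100) (hRN : R ≥ 100 * N)
    (hβ : β = 0.01) (f : ℝ → ℂ → ℂ) (t : ℝ) (ht : t ∈ Set.Icc (-β) β) (z : ℂ)
    (hre : |z.re| ≤ 0.98) (hf : ‖f t z‖ ≤ N) :
    ((R : ℂ) * Complex.exp (Complex.I * t) * ((starRingEnd ℂ) z ^ 2 - 1) + f t z).re
        ≤ N + R * (-Real.cos β + z.re ^ 2 / Real.cos β)
      ∧ N + R * (-Real.cos β + z.re ^ 2 / Real.cos β) < 0 := by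
  have hcosβ : 0.9999 ≤ Real.cos β := hβ ▸ cos_one_hundredth_ge
  have hcost : Real.cos β ≤ Real.cos t :=
    cos_le_cos_of_abs_le (abs_le.mpr ht) (by linarith [Real.pi_gt_three])
  have hbracket : (exp (I * t) * ((starRingEnd ℂ) z ^ 2 - 1)).re
      ≤ -Real.cos β + z.re ^ 2 / Real.cos β :=
    (re_exp_mul_I_mul_conj_sq_sub_one_le (by linarith) z).trans
      (neg_add_sq_div_le_of_le (by linarith) hcost)
  have hx : z.re ^ 2 ≤ 0.98 ^ 2 := sq_le_sq' (abs_le.mp hre).1 (abs_le.mp hre).2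
  have hneg : -Real.cos β + z.re ^ 2 / Real.cos β ≤ -0.039 := by
    have : z.re ^ 2 / Real.cos β ≤ 0.98 ^ 2 / 0.9999 := by gcongr
    linarith [show (0.98 : ℝ) ^ 2 / 0.9999 ≤ 0.9609 by norm_num]
  have hR0 : 0 ≤ R := by linarith
  constructor
  · rw [add_re, mul_assoc, re_ofReal_mul]
    linarith [mul_le_mul_of_nonneg_left hbracket hR0, re_le_norm (f t z)]
  · linarith [mul_le_mul_of_nonneg_left hneg hR0]

theorem stmt_4 (R N β : ℝ) (hR : R ≥ 100) (hN : 0 ≤ N) (hRN : R ≥ 100 * N)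
    (hβ : β = 0.01) (f : ℝ → ℂ → ℂ) (t : ℝ) (ht : t ∈ Set.Icc (-β) β) (z : ℂ)
    (hre : |z.re| ≤ 0.98) (him : |z.im| ≤ 1) (hf : ‖f t z‖ ≤ N) :
    ((R : ℂ) * Complex.exp (Complex.I * t) * ((starRingEnd ℂ) z ^ 2 - 1) + f t z).re
        ≤ N + R * (-Real.cos β + z.re ^ 2 / Real.cos β)
      ∧ N + R * (-Real.cos β + z.re ^ 2 / Real.cos β) < 0 :=
  stmt_4_general R N β hR hRN hβ f t ht z hre hf
end

section
/- Let (X,d) and (Y,ρ) be compact metric spaces, f : X → X and g : Y → Y homeomorphisms, and Φ : X → Y a continuous surjection with Φ ∘ f = g ∘ Φ. Let y₁ ∈ Y be a periodic point of g whose fiber Φ⁻¹({y₁}) is a single point {o₁}, with o₁ periodic for f. If y ∈ Y satisfies α_g(y) = Orb(y₁, g) (the α-limit set of y under g equals the orbit of y₁), then every point o ∈ Φ⁻¹({y}) satisfies α_f(o) = Orb(o₁, f). -/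
/-!
Since `Φ` is a continuous semiconjugacy, it maps `α_f(o)` into `α_g(Φ o) = Orb(y₁, g)`, and
because the fibre over `y₁` (hence over every point of its orbit) is a single point, this forces
`α_f(o) ⊆ Orb(o₁, f)`. Conversely `α_f(o)` is nonempty by compactness and forward invariant
under `f`; as `o₁` is periodic, every point of its orbit is a forward iterate of any other, so a
single point of `α_f(o)` in `Orb(o₁, f)` already yields the whole orbit.
-/

open Filter

/-- The full (two-sided) orbit of a point under a bijection. -/
def fullOrbit {X : Type*} (f : Equiv.Perm X) (x : X) : Set X :=
  Set.range (fun k : ℤ => (f ^ k) x)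

/-- The α-limit set of a point under a bijection: cluster points of the
backward orbit sequence `x, f⁻¹ x, f⁻² x, …`. -/
def alphaLimit {X : Type*} [TopologicalSpace X] (f : Equiv.Perm X) (x : X) : Set X :=
  {p | MapClusterPt p atTop (fun n : ℕ => (f ^ (-(n : ℤ))) x)}

/-- A point is periodic for a bijection if some positive iterate fixes it. -/
def isPeriodicPt {X : Type*} (f : Equiv.Perm X) (x : X) : Prop :=
  ∃ n : ℕ, 1 ≤ n ∧ (f ^ (n : ℤ)) x = x

open Function

namespace Equiv.Perm

variable {X Y : Type*}

lemma semiconj_zpow {f : Perm X} {g : Perm Y} {Φ : X → Y} (h : Semiconj Φ f g) :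
    ∀ k : ℤ, Semiconj Φ ⇑(f ^ k) ⇑(g ^ k)
  | (n : ℕ) => by simpa only [zpow_natCast, coe_pow] using h.iterate_right n
  | .negSucc n => by
    have hpow : Semiconj Φ ⇑(f ^ (n + 1)) ⇑(g ^ (n + 1)) := by
      simpa only [coe_pow] using h.iterate_right (n + 1)
    rw [zpow_negSucc, zpow_negSucc]
    exact hpow.inverses_right (f ^ (n + 1)).right_inv (g ^ (n + 1)).left_inv

lemma zpow_emod_apply {f : Perm X} {x : X} {n : ℕ} (hx : (f ^ (n : ℤ)) x = x) (k : ℤ) :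
    (f ^ (k % n)) x = (f ^ k) x := by
  rw [Int.emod_def, sub_eq_add_neg, zpow_add, mul_apply, ← mul_neg, zpow_mul,
    zpow_apply_eq_self_of_apply_eq_self hx]

end Equiv.Perm

section AlphaLimit

open Equiv Perm

variable {X Y : Type*}

lemma preimage_fullOrbit_subset {f : Perm X} {g : Perm Y} {Φ : X → Y} (h : Semiconj Φ f g)
    {x₁ : X} {y₁ : Y} (hfiber : Φ ⁻¹' {y₁} = {x₁}) :
    Φ ⁻¹' fullOrbit g y₁ ⊆ fullOrbit f x₁ := by
  rintro x ⟨k, hk⟩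
  have hx : (f ^ (-k)) x ∈ Φ ⁻¹' {y₁} := by
    rw [Set.mem_preimage, semiconj_zpow h, ← hk, zpow_neg, Set.mem_singleton_iff, inv_eq_iff_eq]
  rw [hfiber, Set.mem_singleton_iff, zpow_neg, inv_eq_iff_eq] at hx
  exact ⟨k, hx.symm⟩

lemma isPeriodicPt.exists_pow_apply_eq {f : Perm X} {x p q : X} (hx : isPeriodicPt f x)
    (hp : p ∈ fullOrbit f x) (hq : q ∈ fullOrbit f x) : ∃ m : ℕ, (f ^ m) p = q := by
  obtain ⟨n, hn, hxn⟩ := hx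
  obtain ⟨a, rfl⟩ := hp
  obtain ⟨b, rfl⟩ := hq
  have hmod : 0 ≤ (b - a) % (n : ℤ) := Int.emod_nonneg _ (by omega)
  refine ⟨((b - a) % n).toNat, ?_⟩
  rw [← zpow_natCast, Int.toNat_of_nonneg hmod, zpow_apply_comm, zpow_emod_apply hxn,
    ← mul_apply, ← zpow_add, add_sub_cancel]

variable [TopologicalSpace X] [TopologicalSpace Y]

lemma mapsTo_alphaLimit {f : Perm X} {g : Perm Y} {Φ : X → Y} (h : Semiconj Φ f g)
    (hΦ : Continuous Φ) (x : X) : Set.MapsTo Φ (alphaLimit f x) (alphaLimit g (Φ x)) := by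
  intro p hp
  have hcomp :
      (Φ ∘ fun n : ℕ => (f ^ (-(n : ℤ))) x) = fun n : ℕ => (g ^ (-(n : ℤ))) (Φ x) :=
    funext fun n => semiconj_zpow h _ x
  simpa only [alphaLimit, Set.mem_ofPred_eq, hcomp] using hp.continuousAt_comp hΦ.continuousAt

lemma mapsTo_self_alphaLimit {f : Perm X} (hf : Continuous f) (x : X) :
    Set.MapsTo f (alphaLimit f x) (alphaLimit f x) := by
  intro p hp
  have hshift : ((f ∘ fun n : ℕ => (f ^ (-(n : ℤ))) x) ∘ fun n => n + 1) =
      fun n : ℕ => (f ^ (-(n : ℤ))) x := by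
    funext n
    rw [comp_apply, comp_apply, ← mul_apply, ← zpow_one_add]
    congr 2
    push_cast
    ring
  have := hp.continuousAt_comp hf.continuousAt
  rwa [← map_add_atTop_eq_nat 1, ← mapClusterPt_comp, hshift] at this

lemma alphaLimit_nonempty [CompactSpace X] (f : Perm X) (x : X) : (alphaLimit f x).Nonempty :=
  exists_clusterPt_of_compactSpace _

end AlphaLimit

theorem stmt_6_general {X Y : Type*} [MetricSpace X] [CompactSpace X]
    [MetricSpace Y]
    (f : Equiv.Perm X) (hf : Continuous f)
    (g : Equiv.Perm Y)
    (Φ : X → Y) (hΦ : Continuous Φ)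
    (hsemi : ∀ x : X, Φ (f x) = g (Φ x))
    (y₁ : Y)
    (o₁ : X) (hfiber : Φ ⁻¹' {y₁} = {o₁}) (ho₁ : isPeriodicPt f o₁)
    (y : Y) (hy : alphaLimit g y = fullOrbit g y₁) :
    ∀ o ∈ Φ ⁻¹' {y}, alphaLimit f o = fullOrbit f o₁ := by
  rintro o rfl
  have hsub : alphaLimit f o ⊆ fullOrbit f o₁ := fun p hp =>
    preimage_fullOrbit_subset hsemi hfiber (hy ▸ mapsTo_alphaLimit hsemi hΦ o hp)
  obtain ⟨p, hp⟩ := alphaLimit_nonempty f o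
  refine hsub.antisymm fun q hq => ?_
  obtain ⟨m, rfl⟩ := ho₁.exists_pow_apply_eq (hsub hp) hq
  rw [Equiv.Perm.coe_pow]
  exact (mapsTo_self_alphaLimit hf o).iterate m hp

theorem stmt_6 {X Y : Type*} [MetricSpace X] [CompactSpace X]
    [MetricSpace Y] [CompactSpace Y]
    (f : Equiv.Perm X) (hf : Continuous f) (hf' : Continuous f.symm)
    (g : Equiv.Perm Y) (hg : Continuous g) (hg' : Continuous g.symm)
    (Φ : X → Y) (hΦ : Continuous Φ) (hΦsurj : Function.Surjective Φ)
    (hsemi : ∀ x : X, Φ (f x) = g (Φ x))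
    (y₁ : Y) (hy₁ : isPeriodicPt g y₁)
    (o₁ : X) (hfiber : Φ ⁻¹' {y₁} = {o₁}) (ho₁ : isPeriodicPt f o₁)
    (y : Y) (hy : alphaLimit g y = fullOrbit g y₁) :
    ∀ o ∈ Φ ⁻¹' {y}, alphaLimit f o = fullOrbit f o₁ :=
  stmt_6_general f hf g Φ hΦ hsemi y₁ o₁ hfiber ho₁ y hy
end

section
/- Let (X,d) and (Y,ρ) be compact metric spaces, f : X → X and g : Y → Y homeomorphisms, and Φ : X → Y a continuous surjection with Φ ∘ f = g ∘ Φ. Let y₂ ∈ Y be a periodic point of g with Φ⁻¹({y₂}) = {o₂} a singleton, o₂ periodic for f. If y ∈ Y satisfies ω_g(y) = Orb(y₂, g), then every point o ∈ Φ⁻¹({y}) satisfies ω_f(o) = Orb(o₂, f). -/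
open Filter

/-- The ω-limit set of a point under a bijection: cluster points of the
forward orbit sequence `x, f x, f² x, …`. -/
def omegaLimSet {X : Type*} [TopologicalSpace X] (f : Equiv.Perm X) (x : X) : Set X :=
  {p | MapClusterPt p atTop (fun n : ℕ => (f ^ (n : ℤ)) x)}

/-!
Since `Φ` semiconjugates `f` to `g`, it maps `ω_f(o)` into `ω_g(y) = Orb(y₂, g)`; as the fibre over
`y₂` is `{o₂}`, the fibre over every point `gᵏ y₂` is `{fᵏ o₂}`, so `ω_f(o) ⊆ Orb(o₂, f)`.
Conversely `ω_f(o)` is nonempty by compactness and invariant under the homeomorphism `f` and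
its inverse, so it contains the whole orbit of any of its points.
-/

section Semiconj

variable {X Y : Type*} {f : Equiv.Perm X} {g : Equiv.Perm Y} {Φ : X → Y}

theorem zpow_apply_semiconj (hsemi : ∀ x, Φ (f x) = g (Φ x)) (k : ℤ) (x : X) :
    Φ ((f ^ k) x) = (g ^ k) (Φ x) := by
  have hsymm : ∀ x, Φ (f.symm x) = g.symm (Φ x) := fun x => by
    rw [Equiv.eq_symm_apply, ← hsemi, Equiv.apply_symm_apply]
  induction k using Int.induction_on generalizing x with
  | zero => rfl
  | succ n ih => simp only [zpow_add_one, Equiv.Perm.mul_apply, ← hsemi, ih]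
  | pred n ih => simp only [zpow_sub_one, Equiv.Perm.mul_apply, Equiv.Perm.inv_def, ← hsymm, ih]

theorem preimage_fullOrbit_subset_of_fiber (hsemi : ∀ x, Φ (f x) = g (Φ x)) {y₂ : Y} {o₂ : X}
    (hfiber : Φ ⁻¹' {y₂} = {o₂}) : Φ ⁻¹' fullOrbit g y₂ ⊆ fullOrbit f o₂ := by
  rintro p ⟨k, hk⟩
  have hback : (f ^ (-k)) p ∈ Φ ⁻¹' {y₂} := by
    rw [Set.mem_preimage, zpow_apply_semiconj hsemi, ← hk, ← Equiv.Perm.mul_apply, ← zpow_add,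
      neg_add_cancel, zpow_zero, Equiv.Perm.one_apply, Set.mem_singleton_iff]
  rw [hfiber, Set.mem_singleton_iff] at hback
  subst hback
  refine ⟨k, show (f ^ k) ((f ^ (-k)) p) = p from ?_⟩
  rw [← Equiv.Perm.mul_apply, ← zpow_add, add_neg_cancel, zpow_zero, Equiv.Perm.one_apply]

variable [TopologicalSpace X] [TopologicalSpace Y]

theorem map_mem_omegaLimSet (hΦ : Continuous Φ) (hsemi : ∀ x, Φ (f x) = g (Φ x)) {x p : X}
    (hp : p ∈ omegaLimSet f x) : Φ p ∈ omegaLimSet g (Φ x) := by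
  have h := hp.continuousAt_comp hΦ.continuousAt
  simpa only [omegaLimSet, Set.mem_ofPred_eq, Function.comp_def,
    zpow_apply_semiconj hsemi] using h

end Semiconj

section OmegaLimit

variable {X : Type*} [TopologicalSpace X] {f : Equiv.Perm X}

theorem omegaLimSet_apply (f : Equiv.Perm X) (x : X) :
    omegaLimSet f (f x) = omegaLimSet f x := by
  have hshift : (fun n : ℕ => (f ^ (n : ℤ)) (f x)) = (fun n : ℕ => (f ^ (n : ℤ)) x) ∘ (· + 1) := by
    funext n
    simp only [Function.comp_apply, Nat.cast_add, Nat.cast_one, zpow_add_one,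
      Equiv.Perm.mul_apply]
  ext p
  simp only [omegaLimSet, Set.mem_ofPred_eq, hshift, mapClusterPt_comp, map_add_atTop_eq_nat]

theorem omegaLimSet_symm_apply (f : Equiv.Perm X) (x : X) :
    omegaLimSet f (f.symm x) = omegaLimSet f x := by
  rw [← omegaLimSet_apply f, Equiv.apply_symm_apply]

theorem omegaLimSet_nonempty [CompactSpace X] (f : Equiv.Perm X) (x : X) :
    (omegaLimSet f x).Nonempty :=
  exists_clusterPt_of_compactSpace _

theorem apply_mem_omegaLimSet (hf : Continuous f) {x p : X} (hp : p ∈ omegaLimSet f x) :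
    f p ∈ omegaLimSet f x :=
  omegaLimSet_apply f x ▸ map_mem_omegaLimSet hf (fun _ => rfl) hp

theorem symm_apply_mem_omegaLimSet (hf' : Continuous f.symm) {x p : X}
    (hp : p ∈ omegaLimSet f x) : f.symm p ∈ omegaLimSet f x :=
  omegaLimSet_symm_apply f x ▸ map_mem_omegaLimSet hf' (by simp) hp

theorem zpow_apply_mem_omegaLimSet (hf : Continuous f) (hf' : Continuous f.symm) {x p : X}
    (hp : p ∈ omegaLimSet f x) (k : ℤ) : (f ^ k) p ∈ omegaLimSet f x := by
  induction k using Int.induction_on with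
  | zero => exact hp
  | succ n ih =>
    rw [add_comm, zpow_add, zpow_one, Equiv.Perm.mul_apply]
    exact apply_mem_omegaLimSet hf ih
  | pred n ih =>
    rw [sub_eq_neg_add, zpow_add, zpow_neg_one, Equiv.Perm.mul_apply, Equiv.Perm.inv_def]
    exact symm_apply_mem_omegaLimSet hf' ih

theorem fullOrbit_subset_omegaLimSet (hf : Continuous f) (hf' : Continuous f.symm) {x p q : X}
    (hp : p ∈ omegaLimSet f x) (hpq : p ∈ fullOrbit f q) : fullOrbit f q ⊆ omegaLimSet f x := by
  obtain ⟨k, rfl⟩ := hpq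
  rintro _ ⟨m, rfl⟩
  simpa only [← Equiv.Perm.mul_apply, ← zpow_add, sub_add_cancel] using
    zpow_apply_mem_omegaLimSet hf hf' hp (m - k)

end OmegaLimit

theorem stmt_7_general {X Y : Type*} [MetricSpace X] [CompactSpace X]
    [MetricSpace Y]
    (f : Equiv.Perm X) (hf : Continuous f) (hf' : Continuous f.symm)
    (g : Equiv.Perm Y)
    (Φ : X → Y) (hΦ : Continuous Φ)
    (hsemi : ∀ x : X, Φ (f x) = g (Φ x))
    (y₂ : Y)
    (o₂ : X) (hfiber : Φ ⁻¹' {y₂} = {o₂})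
    (y : Y) (hy : omegaLimSet g y = fullOrbit g y₂) :
    ∀ o ∈ Φ ⁻¹' {y}, omegaLimSet f o = fullOrbit f o₂ := by
  rintro o rfl
  have hsub : omegaLimSet f o ⊆ fullOrbit f o₂ := fun p hp =>
    preimage_fullOrbit_subset_of_fiber hsemi hfiber (hy ▸ map_mem_omegaLimSet hΦ hsemi hp)
  obtain ⟨p, hp⟩ := omegaLimSet_nonempty f o
  exact hsub.antisymm (fullOrbit_subset_omegaLimSet hf hf' hp (hsub hp))

theorem stmt_7 {X Y : Type*} [MetricSpace X] [CompactSpace X]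
    [MetricSpace Y] [CompactSpace Y]
    (f : Equiv.Perm X) (hf : Continuous f) (hf' : Continuous f.symm)
    (g : Equiv.Perm Y) (hg : Continuous g) (hg' : Continuous g.symm)
    (Φ : X → Y) (hΦ : Continuous Φ) (hΦsurj : Function.Surjective Φ)
    (hsemi : ∀ x : X, Φ (f x) = g (Φ x))
    (y₂ : Y) (hy₂ : isPeriodicPt g y₂)
    (o₂ : X) (hfiber : Φ ⁻¹' {y₂} = {o₂}) (ho₂ : isPeriodicPt f o₂)
    (y : Y) (hy : omegaLimSet g y = fullOrbit g y₂) :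
    ∀ o ∈ Φ ⁻¹' {y}, omegaLimSet f o = fullOrbit f o₂ :=
  stmt_7_general f hf hf' g Φ hΦ hsemi y₂ o₂ hfiber y hy
end

section
/- Let φ be a local flow on a topological space X, W ⊂ X a Ważewski set, and define the escape-time function σ : W* → [0,∞) by σ(x) = sup{t ∈ [0,∞) : φ([0,t]×{x}) ⊂ W}, where W* = {x ∈ W : φ(t,x) ∉ W for some t > 0}. Then σ is continuous on W*. -/
/-- A local flow on a topological space `X`: a continuous map `φ` defined on an
open set `D ⊆ ℝ × X`, whose time-domains are intervals containing `0`, with the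
usual identity and composition axioms. -/
structure LocalFlow (X : Type*) [TopologicalSpace X] where
  D : Set (ℝ × X)
  isOpen_D : IsOpen D
  toFun : ℝ → X → X
  zero_mem : ∀ x : X, (0, x) ∈ D
  interval : ∀ x : X, Set.OrdConnected {t : ℝ | (t, x) ∈ D}
  map_zero : ∀ x : X, toFun 0 x = x
  comp : ∀ (x : X) (s t : ℝ), (s, x) ∈ D → (t, toFun s x) ∈ D →
    (s + t, x) ∈ D ∧ toFun (s + t) x = toFun t (toFun s x)
  continuousOn : ContinuousOn (fun p : ℝ × X => toFun p.1 p.2) D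

/-- `φ([0,t] × {x}) ⊆ W` (in particular the flow is defined on `[0,t]`). -/
def LocalFlow.segIn {X : Type*} [TopologicalSpace X] (φ : LocalFlow X) (W : Set X)
    (x : X) (t : ℝ) : Prop :=
  ∀ s ∈ Set.Icc (0 : ℝ) t, (s, x) ∈ φ.D ∧ φ.toFun s x ∈ W

/-- The exit set `W⁻`. -/
def LocalFlow.exitSet {X : Type*} [TopologicalSpace X] (φ : LocalFlow X) (W : Set X) : Set X :=
  {x ∈ W | ∀ t > (0 : ℝ), ¬ φ.segIn W x t}

/-- The set `W*` of eventually-escaping points. -/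
def LocalFlow.escapeSet {X : Type*} [TopologicalSpace X] (φ : LocalFlow X) (W : Set X) : Set X :=
  {x ∈ W | ∃ t > (0 : ℝ), (t, x) ∈ φ.D ∧ φ.toFun t x ∉ W}

/-- The escape-time function of `W`. -/
noncomputable def LocalFlow.escapeTime {X : Type*} [TopologicalSpace X]
    (φ : LocalFlow X) (W : Set X) (x : X) : ℝ :=
  sSup {t : ℝ | 0 ≤ t ∧ φ.segIn W x t}

/-!
The escape time `σ` is upper semicontinuous because, by condition (1), shortly after `σ x₀` the
orbit of `x₀` is outside `closure W`, and so are the orbits of nearby points at that same time.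
It is lower semicontinuous because `φ (σ x) x` always lies in the exit set `W⁻`, whereas by
condition (2) the compact arc `φ ([0, c] × {x₀})`, `c < σ x₀`, avoids `closure W⁻`; by
compactness so do the arcs of all nearby points, which forces `σ x > c`.
-/

open Topology

namespace LocalFlow

variable {X : Type*} [TopologicalSpace X] (φ : LocalFlow X) {x : X}

lemma mem_D_of_mem_uIcc {s t u : ℝ} (hs : (s, x) ∈ φ.D) (ht : (t, x) ∈ φ.D)
    (hu : u ∈ Set.uIcc s t) : (u, x) ∈ φ.D :=
  (φ.interval x).uIcc_subset hs ht hu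

lemma mem_D_of_mem_Icc {s t : ℝ} (ht : (t, x) ∈ φ.D) (hs : s ∈ Set.Icc 0 t) : (s, x) ∈ φ.D :=
  (φ.interval x).out (φ.zero_mem x) ht hs

lemma continuousAt_toFun_left {t : ℝ} (ht : (t, x) ∈ φ.D) :
    ContinuousAt (fun s => φ.toFun s x) t :=
  ContinuousAt.comp (f := fun s : ℝ => (s, x))
    (φ.continuousOn.continuousAt (φ.isOpen_D.mem_nhds ht)) (Continuous.prodMk_left x).continuousAt

lemma isOpen_setOf_mem_D_toFun_mem {O : Set X} (hO : IsOpen O) :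
    IsOpen {p : ℝ × X | p ∈ φ.D ∧ φ.toFun p.1 p.2 ∈ O} :=
  φ.continuousOn.isOpen_inter_preimage φ.isOpen_D hO

lemma isOpen_setOf_mem_D_toFun_mem_of_time (s : ℝ) {O : Set X} (hO : IsOpen O) :
    IsOpen {x : X | (s, x) ∈ φ.D ∧ φ.toFun s x ∈ O} :=
  (φ.isOpen_setOf_mem_D_toFun_mem hO).preimage (Continuous.prodMk_right s)

-- Not one of the axioms of `LocalFlow`: it comes from the openness of `D`, via the connectedness
-- of `[[0, b]]`.
lemma mem_D_toFun {a b : ℝ} (ha : (a, x) ∈ φ.D) (hab : (a + b, x) ∈ φ.D) :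
    (b, φ.toFun a x) ∈ φ.D := by
  set y := φ.toFun a x
  suffices Set.uIcc 0 b ⊆ {c | (c, y) ∈ φ.D} from this Set.right_mem_uIcc
  refine isPreconnected_uIcc.subset_of_closure_inter_subset
    (φ.isOpen_D.preimage (Continuous.prodMk_left y)) ⟨0, Set.left_mem_uIcc, φ.zero_mem y⟩ ?_
  rintro c ⟨hc, hcb⟩
  have hac : (a + c, x) ∈ φ.D := by
    refine φ.mem_D_of_mem_uIcc ha hab ?_
    have := Set.mem_image_of_mem (a + ·) hcb
    rwa [Set.image_const_add_uIcc, add_zero] at this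
  have hnear : {c' | (c - c', φ.toFun (a + c') x) ∈ φ.D} ∈ 𝓝 c := by
    have hcont : ContinuousAt (fun c' => (c - c', φ.toFun (a + c') x)) c :=
      (continuousAt_const.sub continuousAt_id).prodMk
        ((φ.continuousAt_toFun_left hac).comp (continuousAt_const.add continuousAt_id))
    refine hcont.preimage_mem_nhds (φ.isOpen_D.mem_nhds ?_)
    simpa using φ.zero_mem (φ.toFun (a + c) x)
  obtain ⟨c', hc'near, hc'y⟩ := mem_closure_iff_nhds.mp hc _ hnear
  have hc'y' : (c - c', φ.toFun c' y) ∈ φ.D := by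
    rw [← (φ.comp x a c' ha hc'y).2]
    exact hc'near
  simpa using (φ.comp y c' (c - c') hc'y hc'y').1

lemma toFun_add {a b : ℝ} (ha : (a, x) ∈ φ.D) (hab : (a + b, x) ∈ φ.D) :
    φ.toFun (a + b) x = φ.toFun b (φ.toFun a x) :=
  (φ.comp x a b ha (φ.mem_D_toFun ha hab)).2

variable {W : Set X}

/-- Condition (1) in the definition of a Ważewski set. -/
def SegInOfSegInClosure (W : Set X) : Prop :=
  ∀ x ∈ W, ∀ t > (0 : ℝ), φ.segIn (closure W) x t → φ.segIn W x t

lemma segIn_zero (hx : x ∈ W) : φ.segIn W x 0 := by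
  intro s hs
  obtain rfl : s = 0 := le_antisymm hs.2 hs.1
  exact ⟨φ.zero_mem x, by rwa [φ.map_zero]⟩

variable {φ} in
lemma segIn.mono {s t : ℝ} (h : φ.segIn W x t) (hst : s ≤ t) : φ.segIn W x s :=
  fun u hu => h u ⟨hu.1, hu.2.trans hst⟩

lemma segIn_add {a b : ℝ} (ha : 0 ≤ a) (h₁ : φ.segIn W x a) (h₂ : φ.segIn W (φ.toFun a x) b) :
    φ.segIn W x (a + b) := by
  intro s hs
  rcases le_or_gt s a with hsa | has
  · exact h₁ s ⟨hs.1, hsa⟩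
  · obtain ⟨hD, hW⟩ := h₂ (s - a) ⟨by linarith, by linarith [hs.2]⟩
    obtain ⟨hD', heq⟩ := φ.comp x a (s - a) (h₁ a ⟨ha, le_rfl⟩).1 hD
    rw [add_sub_cancel] at hD' heq
    exact ⟨hD', heq ▸ hW⟩

lemma segIn_toFun {a b : ℝ} (ha : 0 ≤ a) (h : φ.segIn W x (a + b)) :
    φ.segIn W (φ.toFun a x) b := by
  intro s hs
  have haD : (a, x) ∈ φ.D := (h a ⟨ha, by linarith [hs.1, hs.2]⟩).1
  obtain ⟨hasD, hasW⟩ := h (a + s) ⟨by linarith [hs.1], by linarith [hs.2]⟩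
  exact ⟨φ.mem_D_toFun haD hasD, φ.toFun_add haD hasD ▸ hasW⟩

lemma lt_of_segIn_of_toFun_notMem {s t : ℝ} (h : φ.segIn W x t) (hs : 0 ≤ s)
    (hsW : φ.toFun s x ∉ W) : t < s :=
  not_le.mp fun hst => hsW (h s ⟨hs, hst⟩).2

lemma escapeTime_nonneg : 0 ≤ φ.escapeTime W x :=
  Real.sSup_nonneg fun _ ht => ht.1

lemma escapeTime_le {s : ℝ} (hs : 0 ≤ s) (hsW : φ.toFun s x ∉ W) : φ.escapeTime W x ≤ s :=
  Real.sSup_le (fun _ ht => (φ.lt_of_segIn_of_toFun_notMem ht.2 hs hsW).le) hs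

lemma bddAbove_of_mem_escapeSet (hx : x ∈ φ.escapeSet W) :
    BddAbove {t : ℝ | 0 ≤ t ∧ φ.segIn W x t} := by
  obtain ⟨-, t₀, ht₀, -, ht₀W⟩ := hx
  exact ⟨t₀, fun _ ht => (φ.lt_of_segIn_of_toFun_notMem ht.2 ht₀.le ht₀W).le⟩

lemma le_escapeTime (hx : x ∈ φ.escapeSet W) {t : ℝ} (ht : 0 ≤ t) (h : φ.segIn W x t) :
    t ≤ φ.escapeTime W x :=
  le_csSup (φ.bddAbove_of_mem_escapeSet hx) ⟨ht, h⟩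

lemma toFun_mem_escapeSet (hx : x ∈ φ.escapeSet W) {τ : ℝ} (hτ : 0 ≤ τ) (h : φ.segIn W x τ) :
    φ.toFun τ x ∈ φ.escapeSet W := by
  obtain ⟨-, t₀, ht₀, ht₀D, ht₀W⟩ := hx
  have hτt₀ : τ < t₀ := φ.lt_of_segIn_of_toFun_notMem h ht₀.le ht₀W
  obtain ⟨hτD, hτW⟩ := h τ ⟨hτ, le_rfl⟩
  have ht₀D' : (τ + (t₀ - τ), x) ∈ φ.D := by rwa [add_sub_cancel]
  refine ⟨hτW, t₀ - τ, sub_pos.mpr hτt₀, φ.mem_D_toFun hτD ht₀D', ?_⟩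
  rwa [← φ.toFun_add hτD ht₀D', add_sub_cancel]

lemma segIn_escapeTime (hW₁ : φ.SegInOfSegInClosure W) (hx : x ∈ φ.escapeSet W) :
    φ.segIn W x (φ.escapeTime W x) := by
  obtain ⟨hxW, t₀, ht₀, ht₀D, ht₀W⟩ := hx
  set σ := φ.escapeTime W x
  have hσ0 : 0 ≤ σ := φ.escapeTime_nonneg
  have hσD : (σ, x) ∈ φ.D := φ.mem_D_of_mem_Icc ht₀D ⟨hσ0, φ.escapeTime_le ht₀.le ht₀W⟩
  have hbefore : ∀ s ∈ Set.Ico 0 σ, (s, x) ∈ φ.D ∧ φ.toFun s x ∈ W := fun s hs => by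
    obtain ⟨t, ht, hst⟩ := exists_lt_of_lt_csSup (s := {t | 0 ≤ t ∧ φ.segIn W x t})
      ⟨0, le_rfl, φ.segIn_zero hxW⟩ hs.2
    exact ht.2 s ⟨hs.1, hst.le⟩
  rcases hσ0.eq_or_lt with hσ | hσ
  · rw [← hσ]
    exact φ.segIn_zero hxW
  refine hW₁ x hxW σ hσ fun s hs => ?_
  rcases hs.2.lt_or_eq with hsσ | rfl
  · exact ⟨(hbefore s ⟨hs.1, hsσ⟩).1, subset_closure (hbefore s ⟨hs.1, hsσ⟩).2⟩
  -- The endpoint is a limit of earlier points of the orbit, which all lie in `W`.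
  refine ⟨hσD, closure_mono ?_ ((φ.continuousAt_toFun_left hσD).continuousWithinAt
    |>.mem_closure_image (s := Set.Ico 0 σ) (by rw [closure_Ico hσ.ne]; exact hs))⟩
  rintro _ ⟨u, hu, rfl⟩
  exact (hbefore u hu).2

lemma escapeTime_lt (hW₁ : φ.SegInOfSegInClosure W) (hx : x ∈ φ.escapeSet W) {t : ℝ}
    (ht : 0 ≤ t) (htW : φ.toFun t x ∉ W) : φ.escapeTime W x < t :=
  φ.lt_of_segIn_of_toFun_notMem (φ.segIn_escapeTime hW₁ hx) ht htW

lemma toFun_escapeTime_mem_exitSet (hW₁ : φ.SegInOfSegInClosure W) (hx : x ∈ φ.escapeSet W) :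
    φ.toFun (φ.escapeTime W x) x ∈ φ.exitSet W := by
  have hσ := φ.segIn_escapeTime hW₁ hx
  have hσ0 : 0 ≤ φ.escapeTime W x := φ.escapeTime_nonneg
  refine ⟨(hσ _ ⟨hσ0, le_rfl⟩).2, fun t ht hseg => ?_⟩
  have := φ.le_escapeTime hx (by linarith) (φ.segIn_add hσ0 hσ hseg)
  linarith

/-- A point of `W⁻` on the arc would be an escaping point that nevertheless stays in `W` for a
positive time. -/
lemma toFun_notMem_closure_exitSet (hW₁ : φ.SegInOfSegInClosure W)
    (hW₂ : closure (φ.exitSet W) ∩ φ.escapeSet W ⊆ φ.exitSet W) (hx : x ∈ φ.escapeSet W)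
    {τ : ℝ} (hτ : τ ∈ Set.Ico 0 (φ.escapeTime W x)) :
    φ.toFun τ x ∉ closure (φ.exitSet W) := by
  have hσ := φ.segIn_escapeTime hW₁ hx
  have hrest : φ.segIn W (φ.toFun τ x) (φ.escapeTime W x - τ) :=
    φ.segIn_toFun hτ.1 (by rwa [add_sub_cancel])
  intro hcl
  have hesc := φ.toFun_mem_escapeSet hx hτ.1 (hσ.mono hτ.2.le)
  exact (hW₂ ⟨hcl, hesc⟩).2 _ (sub_pos.mpr hτ.2) hrest

lemma exists_toFun_notMem_closure (hW₁ : φ.SegInOfSegInClosure W) (hx : x ∈ φ.escapeSet W)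
    {c : ℝ} (hc : φ.escapeTime W x < c) :
    ∃ s ∈ Set.Icc 0 c, (s, x) ∈ φ.D ∧ φ.toFun s x ∉ closure W := by
  obtain ⟨hxW, t₀, ht₀, ht₀D, ht₀W⟩ := id hx
  have hσ0 : 0 ≤ φ.escapeTime W x := φ.escapeTime_nonneg
  have ht : φ.escapeTime W x < min c t₀ := lt_min hc (φ.escapeTime_lt hW₁ hx ht₀.le ht₀W)
  have hnot : ¬ φ.segIn (closure W) x (min c t₀) := fun h =>
    (φ.le_escapeTime hx (hσ0.trans ht.le) (hW₁ x hxW _ (hσ0.trans_lt ht) h)).not_gt ht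
  simp only [segIn, not_forall, exists_prop] at hnot
  obtain ⟨s, hs, hsW⟩ := hnot
  have hsD : (s, x) ∈ φ.D := φ.mem_D_of_mem_Icc ht₀D ⟨hs.1, hs.2.trans (min_le_right _ _)⟩
  exact ⟨s, ⟨hs.1, hs.2.trans (min_le_left _ _)⟩, hsD, fun h => hsW ⟨hsD, h⟩⟩

theorem upperSemicontinuousOn_escapeTime (hW₁ : φ.SegInOfSegInClosure W) :
    UpperSemicontinuousOn (φ.escapeTime W) (φ.escapeSet W) := by
  intro x₀ hx₀ c hc
  obtain ⟨c', hc', hc'c⟩ := exists_between hc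
  obtain ⟨s, hs, hsD, hsW⟩ := φ.exists_toFun_notMem_closure hW₁ hx₀ hc'
  have hU := φ.isOpen_setOf_mem_D_toFun_mem_of_time s (O := (closure W)ᶜ)
    isClosed_closure.isOpen_compl
  filter_upwards [mem_nhdsWithin_of_mem_nhds (hU.mem_nhds ⟨hsD, hsW⟩)] with x hx
  have := φ.escapeTime_le hs.1 fun h => hx.2 (subset_closure h)
  linarith [hs.2]

theorem lowerSemicontinuousOn_escapeTime (hW₁ : φ.SegInOfSegInClosure W)
    (hW₂ : closure (φ.exitSet W) ∩ φ.escapeSet W ⊆ φ.exitSet W) :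
    LowerSemicontinuousOn (φ.escapeTime W) (φ.escapeSet W) := by
  intro x₀ hx₀ c hc
  obtain ⟨-, t₀, ht₀, ht₀D, ht₀W⟩ := id hx₀
  set N := {p : ℝ × X | p ∈ φ.D ∧ φ.toFun p.1 p.2 ∈ (closure (φ.exitSet W))ᶜ}
  have hN : IsOpen N := φ.isOpen_setOf_mem_D_toFun_mem isClosed_closure.isOpen_compl
  have hnear : ∀ᶠ x in 𝓝 x₀, ∀ τ ∈ Set.Icc 0 c, (τ, x) ∈ N := by
    refine isCompact_Icc.eventually_forall_of_forall_eventually fun τ hτ => ?_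
    have hτσ : τ < φ.escapeTime W x₀ := hτ.2.trans_lt hc
    have hτD : (τ, x₀) ∈ φ.D :=
      φ.mem_D_of_mem_Icc ht₀D ⟨hτ.1, (hτσ.trans_le (φ.escapeTime_le ht₀.le ht₀W)).le⟩
    have hτN : (τ, x₀) ∈ N := ⟨hτD, φ.toFun_notMem_closure_exitSet hW₁ hW₂ hx₀ ⟨hτ.1, hτσ⟩⟩
    exact continuous_swap.continuousAt.preimage_mem_nhds (hN.mem_nhds hτN)
  filter_upwards [nhdsWithin_le_nhds hnear, self_mem_nhdsWithin] with x hx hxE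
  by_contra! hle
  exact (hx _ ⟨φ.escapeTime_nonneg, hle⟩).2
    (subset_closure (φ.toFun_escapeTime_mem_exitSet hW₁ hxE))

end LocalFlow

theorem stmt_13 {X : Type*} [TopologicalSpace X] (φ : LocalFlow X) (W : Set X)
    (hWaz1 : ∀ x ∈ W, ∀ t > (0 : ℝ),
      (∀ s ∈ Set.Icc (0 : ℝ) t, (s, x) ∈ φ.D ∧ φ.toFun s x ∈ closure W) →
      φ.segIn W x t)
    (hWaz2 : closure (φ.exitSet W) ∩ φ.escapeSet W ⊆ φ.exitSet W) :
    ContinuousOn (φ.escapeTime W) (φ.escapeSet W) :=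
  continuousOn_iff_lower_upperSemicontinuousOn.mpr
    ⟨φ.lowerSemicontinuousOn_escapeTime hWaz1 hWaz2, φ.upperSemicontinuousOn_escapeTime hWaz1⟩
end

section
/- Let R ≥ 100 and β = 0.01. For every t ∈ ℝ and every a ∈ ℂ with Re a ∈ (0, (11/10)β] and |Im a| ≤ tan(β)·Re a, the vector field û(t,a) = −2R ā − R e^{it/2} ā² + (1/2)a satisfies Re[û(t,a)] ≤ Re[a]·(−2R + R·Re[a]·(1+tan²β) + (1/2)√(1+tan²β)) < 0. -/
open Complex
open scoped Real ComplexConjugate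

/-!
Bound the quadratic term by its modulus, `|R e^{it/2} ā²| = R |a|²`, and use the sector condition
`|Im a| ≤ tan β · Re a` to get `|a|² ≤ (Re a)² (1 + tan² β)`; since `√(1 + tan² β) ≥ 1` the linear
term `Re a / 2` is absorbed as well. Negativity is then a size count: for `Re a ≤ 1/2` and
`tan² β ≤ 1` the quadratic part of the rate is at most `R` and `√(1 + tan² β) / 2 < 1 ≤ R`,
against `-2R`.
-/

theorem re_saddle_field_le {R : ℝ} (hR : 0 ≤ R) {c : ℂ} (hc : ‖c‖ = 1) (a : ℂ) :
    (-2 * (R : ℂ) * conj a - R * c * conj a ^ 2 + 1 / 2 * a).re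
      ≤ -2 * R * a.re + R * normSq a + a.re / 2 := by
  have hquad : (-((R : ℂ) * c * conj a ^ 2)).re ≤ R * normSq a :=
    calc (-((R : ℂ) * c * conj a ^ 2)).re ≤ ‖-((R : ℂ) * c * conj a ^ 2)‖ := re_le_norm _
      _ = R * normSq a := by
        rw [norm_neg, norm_mul, norm_mul, norm_pow, hc, RCLike.norm_conj, norm_real,
          Real.norm_of_nonneg hR, ← normSq_eq_norm_sq, mul_one]
  have hre : (-2 * (R : ℂ) * conj a - R * c * conj a ^ 2 + 1 / 2 * a).re
      = -2 * R * a.re + (-((R : ℂ) * c * conj a ^ 2)).re + a.re / 2 := by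
    simp only [sub_eq_add_neg, add_re, neg_re, mul_re, re_ofNat, im_ofNat, ofReal_re,
      ofReal_im, neg_im, conj_re, conj_im, mul_im, one_div, inv_re, inv_im, normSq_ofNat,
      neg_zero, mul_zero, zero_mul, add_zero]
    ring
  linarith

theorem normSq_le_of_abs_im_le {a : ℂ} {T : ℝ} (h : |a.im| ≤ T * a.re) :
    normSq a ≤ a.re ^ 2 * (1 + T ^ 2) := by
  have him : a.im ^ 2 ≤ (T * a.re) ^ 2 := by
    simpa only [sq_abs] using pow_le_pow_left₀ (abs_nonneg a.im) h 2
  rw [normSq_apply]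
  nlinarith

theorem Real.tan_sq_le_one {x : ℝ} (hx : |x| ≤ π / 4) : tan x ^ 2 ≤ 1 := by
  obtain ⟨hlo, hhi⟩ := abs_le.1 hx
  have hmem : ∀ y, -(π / 4) ≤ y → y ≤ π / 4 → y ∈ Set.Ioo (-(π / 2)) (π / 2) := fun y h₁ h₂ =>
    ⟨by linarith [pi_pos], by linarith [pi_pos]⟩
  have hmono := strictMonoOn_tan.monotoneOn
  have hle : tan x ≤ 1 := tan_pi_div_four ▸
    hmono (hmem x hlo hhi) (hmem _ (by linarith [pi_pos]) le_rfl) hhi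
  have hge : -1 ≤ tan x := by
    have := hmono (hmem _ le_rfl (by linarith [pi_pos])) (hmem x hlo hhi) hlo
    rwa [tan_neg, tan_pi_div_four] at this
  exact sq_le_one_iff_abs_le_one _ |>.2 (abs_le.2 ⟨hge, hle⟩)

theorem saddle_drift_rate_neg {R x s : ℝ} (hR : 1 ≤ R) (hx₀ : 0 ≤ x) (hx₁ : x ≤ 1 / 2) (hs : s ≤ 1) :
    -2 * R + R * x * (1 + s) + 1 / 2 * Real.sqrt (1 + s) < 0 := by
  have hquad : R * x * (1 + s) ≤ R := by
    have : x * (1 + s) ≤ 1 := by nlinarith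
    nlinarith
  have hsqrt : Real.sqrt (1 + s) < 2 := by
    rw [Real.sqrt_lt' two_pos]
    linarith
  linarith

theorem stmt_16 (R β : ℝ) (hR : R ≥ 100) (hβ : β = 0.01) (t : ℝ) (a : ℂ)
    (hre : a.re ∈ Set.Ioc (0 : ℝ) ((11 / 10) * β))
    (him : |a.im| ≤ Real.tan β * a.re) :
    (-2 * (R : ℂ) * (starRingEnd ℂ) a
        - (R : ℂ) * Complex.exp (Complex.I * t / 2) * (starRingEnd ℂ) a ^ 2
        + 1 / 2 * a).re
      ≤ a.re * (-2 * R + R * a.re * (1 + Real.tan β ^ 2)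
          + (1 / 2) * Real.sqrt (1 + Real.tan β ^ 2))
    ∧ a.re * (-2 * R + R * a.re * (1 + Real.tan β ^ 2)
          + (1 / 2) * Real.sqrt (1 + Real.tan β ^ 2)) < 0 := by
  obtain ⟨hx₀, hx₁⟩ := hre
  subst hβ
  have hT : Real.tan 0.01 ^ 2 ≤ 1 :=
    Real.tan_sq_le_one (by rw [abs_of_pos (by norm_num)]; linarith [Real.pi_gt_three])
  have hc : ‖exp (I * t / 2)‖ = 1 := by
    rw [mul_div_assoc, ← ofReal_ofNat, ← ofReal_div, norm_exp_I_mul_ofReal]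
  have hsqrt : 1 ≤ Real.sqrt (1 + Real.tan 0.01 ^ 2) :=
    Real.one_le_sqrt.2 (le_add_of_nonneg_right (sq_nonneg _))
  refine ⟨?_, mul_neg_of_pos_of_neg hx₀ <|
    saddle_drift_rate_neg (by linarith) hx₀.le (by linarith) hT⟩
  have hquad : R * normSq a ≤ R * (a.re ^ 2 * (1 + Real.tan 0.01 ^ 2)) :=
    mul_le_mul_of_nonneg_left (normSq_le_of_abs_im_le him) (by linarith)
  have hlin : a.re / 2 ≤ a.re / 2 * Real.sqrt (1 + Real.tan 0.01 ^ 2) :=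
    le_mul_of_one_le_right (by linarith) hsqrt
  linarith [re_saddle_field_le (by linarith : (0 : ℝ) ≤ R) hc a]
end

section
/- Let K = [α,β] × [γ,δ] ⊂ ℝ², and let a continuous time-dependent vector field v(t,x,y) = (v₁, v₂) generate a local process φ on ℝ². Assume for all t ∈ ℝ: v₁ < 0 on the left edge K₁ = {x = α}, v₁ > 0 on the right edge K₂ = {x = β}, v₂ > 0 on the bottom edge K₃ = {y = γ}, and v₂ < 0 on the top edge K₄ = {y = δ}. Let ξ : [ζ,η] → K be a continuous curve with ξ(ζ) ∈ K₁ and ξ(η) ∈ K₂, and let a < b be real. Then there exist μ, ν with ζ < μ < ν < η such that φ_{(a,t)}(ξ(p)) ∈ K for all t ∈ [0, b−a] and p ∈ [μ,ν], φ_{(a,b−a)}(ξ(μ)) ∈ K₁, and φ_{(a,b−a)}(ξ(ν)) ∈ K₂. -/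
/-!
A Ważewski-type argument. Let `A` (resp. `B`) be the parameters `p` whose trajectory reaches
the left (resp. right) edge by time `b - a` without leaving `K` before. By compactness both are
closed; they are disjoint because a trajectory touching an exit edge leaves `K` immediately; and
`ζ ∈ A`, `η ∈ B`. Hence there is a gap `(μ, ν)` with `μ ∈ A`, `ν ∈ B` containing no point of
`A ∪ B`. Trajectories from the gap never touch an exit edge and cannot leave through the
entrance edges, so they stay in `K` up to time `b - a`; by continuity so do those from `μ` and
`ν`, which therefore reach their edges exactly at time `b - a`.
-/

open Filter Topology Set Function

lemma HasDerivAt.eventually_lt_nhdsGT {g : ℝ → ℝ} {d t₀ : ℝ} (hg : HasDerivAt g d t₀)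
    (hd : 0 < d) : ∀ᶠ s in 𝓝[>] t₀, g t₀ < g s := by
  filter_upwards [(hasDerivAt_iff_tendsto_slope_left_right.1 hg).2.eventually_const_lt hd,
    self_mem_nhdsWithin] with s hs hts
  exact (slope_pos_iff_of_le (le_of_lt hts)).1 hs

lemma HasDerivAt.eventually_const_lt_nhdsGT {g : ℝ → ℝ} {d c t₀ : ℝ} (hg : HasDerivAt g d t₀)
    (hc : c ≤ g t₀) (hd : g t₀ = c → 0 < d) : ∀ᶠ s in 𝓝[>] t₀, c < g s := by
  rcases hc.lt_or_eq with hlt | heq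
  · exact nhdsWithin_le_nhds (hg.continuousAt.eventually (lt_mem_nhds hlt))
  · simpa only [heq] using hg.eventually_lt_nhdsGT (hd heq.symm)

lemma HasDerivAt.eventually_lt_const_nhdsGT {g : ℝ → ℝ} {d c t₀ : ℝ} (hg : HasDerivAt g d t₀)
    (hc : g t₀ ≤ c) (hd : g t₀ = c → d < 0) : ∀ᶠ s in 𝓝[>] t₀, g s < c := by
  simpa using hg.neg.eventually_const_lt_nhdsGT (c := -c) (neg_le_neg hc)
    fun h => neg_pos.2 (hd (neg_inj.1 h))

def ReachesWithin {X : Type*} (f : ℝ → X) (K E : Set X) (T : ℝ) : Prop :=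
  ∃ t ∈ Icc 0 T, MapsTo f (Icc 0 t) K ∧ f t ∈ E

lemma reachesWithin_of_zero {X : Type*} {f : ℝ → X} {K E : Set X} {T : ℝ} (hT : 0 ≤ T)
    (hK : f 0 ∈ K) (hE : f 0 ∈ E) : ReachesWithin f K E T :=
  ⟨0, ⟨le_rfl, hT⟩, fun s hs => by rwa [le_antisymm hs.2 hs.1], hE⟩

section Closedness

variable {P X : Type*} [TopologicalSpace P] [TopologicalSpace X]

lemma isClosed_setOf_mapsTo_Icc {F : P → ℝ → X} (hF : Continuous (uncurry F)) {K : Set X}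
    (hK : IsClosed K) : IsClosed {q : P × ℝ | 0 ≤ q.2 ∧ MapsTo (F q.1) (Icc 0 q.2) K} := by
  -- rescaling `[0, t]` to `[0, 1]` makes the condition an intersection of closed conditions
  have hIcc : ∀ t : ℝ, 0 ≤ t → Icc 0 t = (· * t) '' Icc 0 1 := fun t ht => by
    rw [image_mul_right_Icc zero_le_one ht, zero_mul, one_mul]
  have : {q : P × ℝ | 0 ≤ q.2 ∧ MapsTo (F q.1) (Icc 0 q.2) K} =
      {q | 0 ≤ q.2} ∩ ⋂ r ∈ Icc (0 : ℝ) 1, {q | F q.1 (r * q.2) ∈ K} := by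
    ext ⟨p, t⟩
    simp only [mem_inter_iff, mem_iInter]
    refine and_congr_right fun ht => ?_
    rw [hIcc t ht, mapsTo_image_iff]
    rfl
  rw [this]
  exact (isClosed_le continuous_const continuous_snd).inter <| isClosed_biInter fun r _ =>
    hK.preimage (hF.comp (continuous_fst.prodMk (continuous_const.mul continuous_snd)))

lemma isClosed_setOf_reachesWithin [T2Space P] {F : P → ℝ → X} {I : Set P} (hI : IsCompact I)
    (hF : Continuous (uncurry F)) {K E : Set X} (hK : IsClosed K) (hE : IsClosed E) (T : ℝ) :
    IsClosed {p ∈ I | ReachesWithin (F p) K E T} := by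
  have hC : IsCompact ((I ×ˢ Icc 0 T) ∩ {q | 0 ≤ q.2 ∧ MapsTo (F q.1) (Icc 0 q.2) K} ∩
      uncurry F ⁻¹' E) :=
    ((hI.prod isCompact_Icc).inter_right (isClosed_setOf_mapsTo_Icc hF hK)).inter_right
      (hE.preimage hF)
  convert (hC.image continuous_fst).isClosed using 1
  ext p
  constructor
  · rintro ⟨hp, t, ht, hKt, hEt⟩
    exact ⟨(p, t), ⟨⟨⟨hp, ht⟩, ht.1, hKt⟩, hEt⟩, rfl⟩
  · rintro ⟨⟨p, t⟩, ⟨⟨⟨hp, ht⟩, -, hKt⟩, hEt⟩, rfl⟩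
    exact ⟨hp, t, ht, hKt, hEt⟩

end Closedness

lemma IsClosed.exists_Ioo_disjoint_union {A B : Set ℝ} {ζ η : ℝ} (hA : IsClosed A)
    (hB : IsClosed B) (hAB : Disjoint A B) (hζ : ζ ∈ A) (hη : η ∈ B) (hζη : ζ ≤ η) :
    ∃ μ ∈ A, ∃ ν ∈ B, ζ ≤ μ ∧ μ < ν ∧ ν ≤ η ∧ Disjoint (Ioo μ ν) (A ∪ B) := by
  have hBbdd : BddBelow (B ∩ Ici ζ) := ⟨ζ, fun _ hp => hp.2⟩
  obtain ⟨hνB, hζν⟩ := (hB.inter isClosed_Ici).csInf_mem ⟨η, hη, hζη⟩ hBbdd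
  set ν := sInf (B ∩ Ici ζ)
  have hAbdd : BddAbove (A ∩ Icc ζ ν) := ⟨ν, fun _ hp => hp.2.2⟩
  obtain ⟨hμA, hζμ, hμν⟩ := (hA.inter isClosed_Icc).csSup_mem ⟨ζ, hζ, le_rfl, hζν⟩ hAbdd
  set μ := sSup (A ∩ Icc ζ ν)
  refine ⟨μ, hμA, ν, hνB, hζμ, hμν.lt_of_ne fun h => hAB.ne_of_mem hμA hνB h,
    csInf_le hBbdd ⟨hη, hζη⟩, disjoint_left.2 fun q hq hqAB => ?_⟩
  rcases hqAB with hqA | hqB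
  · exact (le_csSup hAbdd ⟨hqA, hζμ.trans hq.1.le, hq.2.le⟩).not_gt hq.1
  · exact (csInf_le hBbdd ⟨hqB, hζμ.trans hq.1.le⟩).not_gt hq.2

structure IsIsolatingBlock (w : ℝ → ℝ × ℝ → ℝ × ℝ) (α β γ δ : ℝ) : Prop where
  left : ∀ t y, y ∈ Icc γ δ → (w t (α, y)).1 < 0
  right : ∀ t y, y ∈ Icc γ δ → 0 < (w t (β, y)).1
  bottom : ∀ t x, x ∈ Icc α β → 0 < (w t (x, γ)).2
  top : ∀ t x, x ∈ Icc α β → (w t (x, δ)).2 < 0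

namespace IsIsolatingBlock

variable {w : ℝ → ℝ × ℝ → ℝ × ℝ} {α β γ δ : ℝ} {f : ℝ → ℝ × ℝ} {t₀ : ℝ}

lemma eventually_fst_lt_left (hw : IsIsolatingBlock w α β γ δ)
    (hf : HasDerivAt f (w t₀ (f t₀)) t₀) (hmem : f t₀ ∈ Icc α β ×ˢ Icc γ δ)
    (hx : (f t₀).1 = α) : ∀ᶠ s in 𝓝[>] t₀, (f s).1 < α := by
  have hf₁ : HasDerivAt (fun s => (f s).1) (w t₀ (f t₀)).1 t₀ := hf.fst
  exact hf₁.eventually_lt_const_nhdsGT hx.le fun _ => by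
    simpa [← hx] using hw.left t₀ _ hmem.2

lemma eventually_right_lt_fst (hw : IsIsolatingBlock w α β γ δ)
    (hf : HasDerivAt f (w t₀ (f t₀)) t₀) (hmem : f t₀ ∈ Icc α β ×ˢ Icc γ δ)
    (hx : (f t₀).1 = β) : ∀ᶠ s in 𝓝[>] t₀, β < (f s).1 := by
  have hf₁ : HasDerivAt (fun s => (f s).1) (w t₀ (f t₀)).1 t₀ := hf.fst
  exact hf₁.eventually_const_lt_nhdsGT hx.ge fun _ => by
    simpa [← hx] using hw.right t₀ _ hmem.2

lemma eventually_mem (hw : IsIsolatingBlock w α β γ δ) (hf : HasDerivAt f (w t₀ (f t₀)) t₀)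
    (hmem : f t₀ ∈ Icc α β ×ˢ Icc γ δ) (hx : (f t₀).1 ∈ Ioo α β) :
    ∀ᶠ s in 𝓝[>] t₀, f s ∈ Icc α β ×ˢ Icc γ δ := by
  have hf₁ : HasDerivAt (fun s => (f s).1) (w t₀ (f t₀)).1 t₀ := hf.fst
  have hf₂ : HasDerivAt (fun s => (f s).2) (w t₀ (f t₀)).2 t₀ := hf.snd
  filter_upwards [hf₁.eventually_const_lt_nhdsGT hx.1.le fun h => absurd h hx.1.ne',
    hf₁.eventually_lt_const_nhdsGT hx.2.le fun h => absurd h hx.2.ne,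
    hf₂.eventually_const_lt_nhdsGT hmem.2.1 fun h => by
      simpa [← h] using hw.bottom t₀ _ hmem.1,
    hf₂.eventually_lt_const_nhdsGT hmem.2.2 fun h => by
      simpa [← h] using hw.top t₀ _ hmem.1] with s hα hβ hγ hδ
  exact ⟨⟨hα.le, hβ.le⟩, hγ.le, hδ.le⟩

lemma fst_ne_of_mapsTo (hw : IsIsolatingBlock w α β γ δ) (hf : HasDerivAt f (w t₀ (f t₀)) t₀)
    {t₁ : ℝ} (ht : t₀ < t₁) (hK : MapsTo f (Icc t₀ t₁) (Icc α β ×ˢ Icc γ δ)) :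
    (f t₀).1 ≠ α ∧ (f t₀).1 ≠ β := by
  have hmem := hK ⟨le_rfl, ht.le⟩
  have hstay : ∀ᶠ s in 𝓝[>] t₀, f s ∈ Icc α β ×ˢ Icc γ δ :=
    eventually_of_mem (Ioo_mem_nhdsGT ht) fun s hs => hK (Ioo_subset_Icc_self hs)
  constructor
  · intro hx
    obtain ⟨s, hs, hsK⟩ := ((hw.eventually_fst_lt_left hf hmem hx).and hstay).exists
    exact hs.not_ge hsK.1.1
  · intro hx
    obtain ⟨s, hs, hsK⟩ := ((hw.eventually_right_lt_fst hf hmem hx).and hstay).exists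
    exact hs.not_ge hsK.1.2

variable {T : ℝ}

lemma fst_eq_of_reachesWithin (hw : IsIsolatingBlock w α β γ δ)
    (hf : ∀ t, HasDerivAt f (w t (f t)) t) {c : ℝ} (hc : c = α ∨ c = β)
    (hr : ReachesWithin f (Icc α β ×ˢ Icc γ δ) {z | z.1 = c} T)
    (hK : MapsTo f (Icc 0 T) (Icc α β ×ˢ Icc γ δ)) : (f T).1 = c := by
  obtain ⟨t, ht, -, hft⟩ := hr
  rcases ht.2.eq_or_lt with rfl | hlt
  · exact hft
  · have hne := hw.fst_ne_of_mapsTo (hf t) hlt (hK.mono_left (Icc_subset_Icc_left ht.1))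
    rcases hc with rfl | rfl
    exacts [absurd hft hne.1, absurd hft hne.2]

lemma not_reachesWithin_left_and_right (hw : IsIsolatingBlock w α β γ δ)
    (hf : ∀ t, HasDerivAt f (w t (f t)) t) (hαβ : α < β) :
    ¬ (ReachesWithin f (Icc α β ×ˢ Icc γ δ) {z | z.1 = α} T ∧
      ReachesWithin f (Icc α β ×ˢ Icc γ δ) {z | z.1 = β} T) := by
  rintro ⟨⟨tα, htα, hKα, hα⟩, ⟨tβ, htβ, hKβ, hβ⟩⟩
  rcases le_total tα tβ with h | h
  · have := hw.fst_eq_of_reachesWithin hf (Or.inl rfl) ⟨tα, ⟨htα.1, h⟩, hKα, hα⟩ hKβ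
    exact hαβ.ne (this.symm.trans hβ)
  · have := hw.fst_eq_of_reachesWithin hf (Or.inr rfl) ⟨tβ, ⟨htβ.1, h⟩, hKβ, hβ⟩ hKα
    exact hαβ.ne (hα.symm.trans this)

lemma mapsTo_of_not_reachesWithin (hw : IsIsolatingBlock w α β γ δ)
    (hf : ∀ t, HasDerivAt f (w t (f t)) t) (h0 : f 0 ∈ Icc α β ×ˢ Icc γ δ)
    (hα : ¬ ReachesWithin f (Icc α β ×ˢ Icc γ δ) {z | z.1 = α} T)
    (hβ : ¬ ReachesWithin f (Icc α β ×ˢ Icc γ δ) {z | z.1 = β} T) :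
    MapsTo f (Icc 0 T) (Icc α β ×ˢ Icc γ δ) := by
  have hfc : Continuous f := continuous_iff_continuousAt.2 fun t => (hf t).continuousAt
  refine IsClosed.Icc_subset_of_forall_mem_nhdsGT_of_Icc_subset
    (((isClosed_Icc.prod isClosed_Icc).preimage hfc).inter isClosed_Icc) h0 fun t ht hKt => ?_
  have hmem := hKt ⟨ht.1, le_rfl⟩
  exact hw.eventually_mem (hf t) hmem
    ⟨hmem.1.1.lt_of_ne fun h => hα ⟨t, Ico_subset_Icc_self ht, hKt, h.symm⟩,
      hmem.1.2.lt_of_ne fun h => hβ ⟨t, Ico_subset_Icc_self ht, hKt, h⟩⟩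

theorem exists_Icc_mapsTo_fst_eq (hw : IsIsolatingBlock w α β γ δ) (hαβ : α < β)
    {F : ℝ → ℝ → ℝ × ℝ} (hF : Continuous (uncurry F))
    (hFderiv : ∀ p t, HasDerivAt (F p) (w t (F p t)) t) {ζ η : ℝ} (hζη : ζ ≤ η) (hT : 0 < T)
    (hF0 : ∀ p ∈ Icc ζ η, F p 0 ∈ Icc α β ×ˢ Icc γ δ) (hζ : (F ζ 0).1 = α)
    (hη : (F η 0).1 = β) :
    ∃ μ ν, ζ < μ ∧ μ < ν ∧ ν < η ∧
      (∀ p ∈ Icc μ ν, MapsTo (F p) (Icc 0 T) (Icc α β ×ˢ Icc γ δ)) ∧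
      (F μ T).1 = α ∧ (F ν T).1 = β := by
  have hK : IsClosed (Icc α β ×ˢ Icc γ δ) := isClosed_Icc.prod isClosed_Icc
  set A := {p ∈ Icc ζ η | ReachesWithin (F p) (Icc α β ×ˢ Icc γ δ) {z | z.1 = α} T}
  set B := {p ∈ Icc ζ η | ReachesWithin (F p) (Icc α β ×ˢ Icc γ δ) {z | z.1 = β} T}
  have hA : IsClosed A := isClosed_setOf_reachesWithin isCompact_Icc hF hK
    (isClosed_eq continuous_fst continuous_const) T
  have hB : IsClosed B := isClosed_setOf_reachesWithin isCompact_Icc hF hK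
    (isClosed_eq continuous_fst continuous_const) T
  have hAB : Disjoint A B := disjoint_left.2 fun p hpA hpB =>
    hw.not_reachesWithin_left_and_right (hFderiv p) hαβ ⟨hpA.2, hpB.2⟩
  obtain ⟨μ, hμA, ν, hνB, hζμ, hμν, hνη, hgap⟩ := hA.exists_Ioo_disjoint_union hB hAB
    ⟨left_mem_Icc.2 hζη, reachesWithin_of_zero hT.le (hF0 ζ (left_mem_Icc.2 hζη)) hζ⟩
    ⟨right_mem_Icc.2 hζη, reachesWithin_of_zero hT.le (hF0 η (right_mem_Icc.2 hζη)) hη⟩ hζη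
  have hsub : Icc μ ν ⊆ Icc ζ η := Icc_subset_Icc hζμ hνη
  have hgapK : Ioo μ ν ⊆ {p | MapsTo (F p) (Icc 0 T) (Icc α β ×ˢ Icc γ δ)} := fun p hp =>
    have hp' := hsub (Ioo_subset_Icc_self hp)
    hw.mapsTo_of_not_reachesWithin (hFderiv p) (hF0 p hp')
      (fun h => hgap.notMem_of_mem_left hp (Or.inl ⟨hp', h⟩))
      (fun h => hgap.notMem_of_mem_left hp (Or.inr ⟨hp', h⟩))
  have hmaps : ∀ p ∈ Icc μ ν, MapsTo (F p) (Icc 0 T) (Icc α β ×ˢ Icc γ δ) := by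
    have hclosed : IsClosed {p | MapsTo (F p) (Icc 0 T) (Icc α β ×ˢ Icc γ δ)} := by
      simp only [MapsTo, ofPred_forall]
      exact isClosed_iInter fun t => isClosed_iInter fun _ =>
        hK.preimage (hF.comp (Continuous.prodMk_left t))
    rw [← closure_Ioo hμν.ne]
    exact closure_minimal hgapK hclosed
  have hμK := hmaps μ (left_mem_Icc.2 hμν.le)
  have hνK := hmaps ν (right_mem_Icc.2 hμν.le)
  refine ⟨μ, ν, hζμ.lt_of_ne ?_, hμν, hνη.lt_of_ne ?_, hmaps,
    hw.fst_eq_of_reachesWithin (hFderiv μ) (Or.inl rfl) hμA.2 hμK,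
    hw.fst_eq_of_reachesWithin (hFderiv ν) (Or.inr rfl) hνB.2 hνK⟩
  · rintro rfl
    exact (hw.fst_ne_of_mapsTo (hFderiv _ 0) hT hμK).1 hζ
  · rintro rfl
    exact (hw.fst_ne_of_mapsTo (hFderiv _ 0) hT hνK).2 hη

end IsIsolatingBlock

theorem stmt_17_general (α β γ δ ζ η a b : ℝ)
    (hαβ : α < β) (hζη : ζ < η) (hab : a < b)
    (v : ℝ → ℝ × ℝ → ℝ × ℝ)
    -- `φ τ z t` is the value at time `τ + t` of the solution with value `z` at time `τ`
    (φ : ℝ → (ℝ × ℝ) → ℝ → ℝ × ℝ)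
    (hφ0 : ∀ (τ : ℝ) (z : ℝ × ℝ), φ τ z 0 = z)
    (hφderiv : ∀ (τ : ℝ) (z : ℝ × ℝ) (t : ℝ),
      HasDerivAt (φ τ z) (v (τ + t) (φ τ z t)) t)
    (hφcont : Continuous (fun p : ℝ × (ℝ × ℝ) × ℝ => φ p.1 p.2.1 p.2.2))
    -- edge sign conditions on the rectangle `K = [α,β] × [γ,δ]`
    (hK1 : ∀ (t : ℝ) (y : ℝ), y ∈ Set.Icc γ δ → (v t (α, y)).1 < 0)
    (hK2 : ∀ (t : ℝ) (y : ℝ), y ∈ Set.Icc γ δ → (v t (β, y)).1 > 0)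
    (hK3 : ∀ (t : ℝ) (x : ℝ), x ∈ Set.Icc α β → (v t (x, γ)).2 > 0)
    (hK4 : ∀ (t : ℝ) (x : ℝ), x ∈ Set.Icc α β → (v t (x, δ)).2 < 0)
    (ξ : ℝ → ℝ × ℝ) (hξ : ContinuousOn ξ (Set.Icc ζ η))
    (hξK : ∀ p ∈ Set.Icc ζ η, ξ p ∈ Set.Icc α β ×ˢ Set.Icc γ δ)
    (hξζ : (ξ ζ).1 = α) (hξη : (ξ η).1 = β) :
    ∃ μ ν : ℝ, ζ < μ ∧ μ < ν ∧ ν < η ∧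
      (∀ t ∈ Set.Icc (0 : ℝ) (b - a), ∀ p ∈ Set.Icc μ ν,
        φ a (ξ p) t ∈ Set.Icc α β ×ˢ Set.Icc γ δ) ∧
      (φ a (ξ μ) (b - a)).1 = α ∧ (φ a (ξ ν) (b - a)).1 = β := by
  set ξ' : ℝ → ℝ × ℝ := IccExtend hζη.le (domRestrict (Icc ζ η) ξ)
  have hξ' : ∀ p ∈ Icc ζ η, ξ' p = ξ p := fun p hp => IccExtend_of_mem _ _ hp
  have hw : IsIsolatingBlock (fun t => v (a + t)) α β γ δ :=
    ⟨fun t => hK1 (a + t), fun t => hK2 (a + t), fun t => hK3 (a + t), fun t => hK4 (a + t)⟩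
  have hξ'c : Continuous ξ' := hξ.domRestrict.Icc_extend'
  have hF : Continuous (uncurry fun p => φ a (ξ' p)) :=
    hφcont.comp (continuous_const.prodMk ((hξ'c.comp continuous_fst).prodMk continuous_snd))
  obtain ⟨μ, ν, hζμ, hμν, hνη, hmaps, hμ, hν⟩ :=
    hw.exists_Icc_mapsTo_fst_eq hαβ hF (fun p => hφderiv a (ξ' p)) hζη.le (sub_pos.2 hab)
      (fun p hp => by simpa [hξ' p hp, hφ0] using hξK p hp)
      (by simpa [hξ' ζ (left_mem_Icc.2 hζη.le), hφ0] using hξζ)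
      (by simpa [hξ' η (right_mem_Icc.2 hζη.le), hφ0] using hξη)
  have hsub : Icc μ ν ⊆ Icc ζ η := Icc_subset_Icc hζμ.le hνη.le
  refine ⟨μ, ν, hζμ, hμν, hνη, fun t ht p hp => ?_, ?_, ?_⟩
  · simpa [hξ' p (hsub hp)] using hmaps p hp ht
  · simpa [hξ' μ (hsub (left_mem_Icc.2 hμν.le))] using hμ
  · simpa [hξ' ν (hsub (right_mem_Icc.2 hμν.le))] using hν

theorem stmt_17 (α β γ δ ζ η a b : ℝ)
    (hαβ : α < β) (hγδ : γ < δ) (hζη : ζ < η) (hab : a < b)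
    (v : ℝ → ℝ × ℝ → ℝ × ℝ) (hv : Continuous (fun p : ℝ × (ℝ × ℝ) => v p.1 p.2))
    -- `φ τ z t` is the value at time `τ + t` of the solution with value `z` at time `τ`
    (φ : ℝ → (ℝ × ℝ) → ℝ → ℝ × ℝ)
    (hφ0 : ∀ (τ : ℝ) (z : ℝ × ℝ), φ τ z 0 = z)
    (hφderiv : ∀ (τ : ℝ) (z : ℝ × ℝ) (t : ℝ),
      HasDerivAt (φ τ z) (v (τ + t) (φ τ z t)) t)
    (hφcont : Continuous (fun p : ℝ × (ℝ × ℝ) × ℝ => φ p.1 p.2.1 p.2.2))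
    -- edge sign conditions on the rectangle `K = [α,β] × [γ,δ]`
    (hK1 : ∀ (t : ℝ) (y : ℝ), y ∈ Set.Icc γ δ → (v t (α, y)).1 < 0)
    (hK2 : ∀ (t : ℝ) (y : ℝ), y ∈ Set.Icc γ δ → (v t (β, y)).1 > 0)
    (hK3 : ∀ (t : ℝ) (x : ℝ), x ∈ Set.Icc α β → (v t (x, γ)).2 > 0)
    (hK4 : ∀ (t : ℝ) (x : ℝ), x ∈ Set.Icc α β → (v t (x, δ)).2 < 0)
    (ξ : ℝ → ℝ × ℝ) (hξ : ContinuousOn ξ (Set.Icc ζ η))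
    (hξK : ∀ p ∈ Set.Icc ζ η, ξ p ∈ Set.Icc α β ×ˢ Set.Icc γ δ)
    (hξζ : (ξ ζ).1 = α) (hξη : (ξ η).1 = β) :
    ∃ μ ν : ℝ, ζ < μ ∧ μ < ν ∧ ν < η ∧
      (∀ t ∈ Set.Icc (0 : ℝ) (b - a), ∀ p ∈ Set.Icc μ ν,
        φ a (ξ p) t ∈ Set.Icc α β ×ˢ Set.Icc γ δ) ∧
      (φ a (ξ μ) (b - a)).1 = α ∧ (φ a (ξ ν) (b - a)).1 = β :=
  stmt_17_general α β γ δ ζ η a b hαβ hζη hab v φ hφ0 hφderiv hφcont hK1 hK2 hK3 hK4 ξ hξ hξK hξζ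
    hξη
end
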